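/- With S, φ₁, φ₂, d, s as before, if s > d/2 then the modified Newton distance δ_mod(S) equals s. -/
import Mathlib


open MvPolynomial

/-- `N₀(S)`. -/
noncomputable def newtonRegion {σ : Type*} (S : MvPolynomial σ ℝ) : Set (σ → ℝ) :=
  convexHull ℝ {p | ∃ d ∈ S.support, ∀ k, (d k : ℝ) ≤ p k}

/-- The Newton distance `δ(S) = inf {δ > 0 : (δ,…,δ) ∈ N₀(S)}`. -/
noncomputable def newtonDistance {σ : Type*} (S : MvPolynomial σ ℝ) : ℝ :=
  sInf {δ : ℝ | 0 < δ ∧ (fun _ => δ) ∈ newtonRegion S}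

/-- The substitution implementing `(x,z) ↦ (Ax, Bz)` for `2×2` matrices `A`, `B`. -/
noncomputable def linSubst (A B : Matrix (Fin 2) (Fin 2) ℝ) :
    Fin 2 ⊕ Fin 2 → MvPolynomial (Fin 2 ⊕ Fin 2) ℝ :=
  Sum.elim (fun i => ∑ j, C (A i j) * X (Sum.inl j))
    (fun i => ∑ j, C (B i j) * X (Sum.inr j))

/-- The modified Newton distance
`δ_mod(S) = sup { δ(S(Ax,Bz)) : A, B ∈ GL(2,ℝ) }`. -/
noncomputable def modNewtonDistance (S : MvPolynomial (Fin 2 ⊕ Fin 2) ℝ) : ℝ :=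
  sSup {t : ℝ | ∃ A B : Matrix (Fin 2) (Fin 2) ℝ, IsUnit A.det ∧ IsUnit B.det ∧
    t = newtonDistance (aeval (linSubst A B) S)}

/-- The linear form `a z₁ + b z₂` on `ℝ²_z`. -/
noncomputable def linForm (a b : ℝ) : MvPolynomial (Fin 2) ℝ :=
  C a * X 0 + C b * X 1

/-! ### Auxiliary lemmas -/

open Finsupp

section Aux

lemma aux_monomial_one_dvd_iff {p : MvPolynomial (Fin 2) ℝ} {j : Fin 2 →₀ ℕ} :
    monomial j (1:ℝ) ∣ p ↔ ∀ m ∈ p.support, j ≤ m := by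
  constructor
  · rintro ⟨q, rfl⟩ m hm
    rw [MvPolynomial.mem_support_iff, coeff_monomial_mul'] at hm
    by_contra h
    simp [h] at hm
  · intro h
    refine ⟨∑ m ∈ p.support, monomial (m - j) (coeff m p), ?_⟩
    rw [Finset.mul_sum]
    conv_lhs => rw [p.as_sum]
    refine Finset.sum_congr rfl fun m hm => ?_
    rw [monomial_mul, one_mul, add_tsub_cancel_of_le (h m hm)]

lemma aux_X_pow_dvd_iff {p : MvPolynomial (Fin 2) ℝ} {i : Fin 2} {k : ℕ} :
    X i ^ k ∣ p ↔ ∀ m ∈ p.support, k ≤ m i := by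
  rw [X_pow_eq_monomial, aux_monomial_one_dvd_iff]
  simp [Finsupp.single_le_iff]

lemma aux_degree_two {m : Fin 2 →₀ ℕ} : m 0 + m 1 = m.degree := by
  rw [Finsupp.degree, ← Fin.sum_univ_two (f := fun i => m i)]
  exact (Finset.sum_subset (Finset.subset_univ _) (by simp +contextual)).symm

lemma aux_homog_support {p : MvPolynomial (Fin 2) ℝ} {d : ℕ} (hp : p.IsHomogeneous d)
    {m : Fin 2 →₀ ℕ} (hm : m ∈ p.support) : m 0 + m 1 = d := by
  rw [aux_degree_two]
  by_contra h
  exact MvPolynomial.mem_support_iff.mp hm (hp.coeff_eq_zero h)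

/-- The standard form `x₁ p(z) + x₂ q(z)`. -/
noncomputable def stdForm (p q : MvPolynomial (Fin 2) ℝ) : MvPolynomial (Fin 2 ⊕ Fin 2) ℝ :=
  X (Sum.inl 0) * rename Sum.inr p + X (Sum.inl 1) * rename Sum.inr q

lemma aux_supp_term {p : MvPolynomial (Fin 2) ℝ} {i : Fin 2} {u : (Fin 2 ⊕ Fin 2) →₀ ℕ} :
    u ∈ (X (Sum.inl i) * rename (Sum.inr : Fin 2 → Fin 2 ⊕ Fin 2) p).support ↔
      ∃ m ∈ p.support, u = Finsupp.single (Sum.inl i) 1 + m.mapDomain Sum.inr := by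
  classical
  rw [support_X_mul, support_rename_of_injective Sum.inr_injective]
  simp only [Finset.mem_map, Finset.mem_image, addLeftEmbedding_apply]
  constructor
  · rintro ⟨v, ⟨m, hm, rfl⟩, rfl⟩; exact ⟨m, hm, rfl⟩
  · rintro ⟨m, hm, rfl⟩; exact ⟨_, ⟨m, hm, rfl⟩, rfl⟩

lemma aux_pt_apply_inl {i j : Fin 2} {m : Fin 2 →₀ ℕ} :
    (Finsupp.single (Sum.inl i) 1 + m.mapDomain Sum.inr : (Fin 2 ⊕ Fin 2) →₀ ℕ) (Sum.inl j)
      = if i = j then 1 else 0 := by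
  classical
  rw [Finsupp.add_apply, Finsupp.mapDomain_notin_range _ _ (by simp), Finsupp.single_apply]
  simp

lemma aux_pt_apply_inr {i : Fin 2} {m : Fin 2 →₀ ℕ} (j : Fin 2) :
    (Finsupp.single (Sum.inl i) 1 + m.mapDomain Sum.inr : (Fin 2 ⊕ Fin 2) →₀ ℕ) (Sum.inr j)
      = m j := by
  classical
  rw [Finsupp.add_apply, Finsupp.mapDomain_apply Sum.inr_injective, Finsupp.single_apply]
  simp

lemma aux_supp_stdForm {p q : MvPolynomial (Fin 2) ℝ} {u : (Fin 2 ⊕ Fin 2) →₀ ℕ} :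
    u ∈ (stdForm p q).support ↔
      (∃ m ∈ p.support, u = Finsupp.single (Sum.inl 0) 1 + m.mapDomain Sum.inr) ∨
      (∃ m ∈ q.support, u = Finsupp.single (Sum.inl 1) 1 + m.mapDomain Sum.inr) := by
  classical
  have hdisj : Disjoint (X (Sum.inl (0:Fin 2)) * rename (Sum.inr : Fin 2 → Fin 2 ⊕ Fin 2) p).support
      (X (Sum.inl (1:Fin 2)) * rename (Sum.inr : Fin 2 → Fin 2 ⊕ Fin 2) q).support := by
    rw [Finset.disjoint_left]
    intro v hv1 hv2
    rw [aux_supp_term] at hv1 hv2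
    obtain ⟨m, _, rfl⟩ := hv1
    obtain ⟨m', _, he⟩ := hv2
    have h0 := congrArg (fun f : (Fin 2 ⊕ Fin 2) →₀ ℕ => f (Sum.inl 0)) he
    simp only [aux_pt_apply_inl] at h0
    simp at h0
  have : (stdForm p q).support =
      (X (Sum.inl (0:Fin 2)) * rename (Sum.inr : Fin 2 → Fin 2 ⊕ Fin 2) p).support ∪
      (X (Sum.inl (1:Fin 2)) * rename (Sum.inr : Fin 2 → Fin 2 ⊕ Fin 2) q).support :=
    Finsupp.support_add_eq hdisj
  rw [this, Finset.mem_union, aux_supp_term, aux_supp_term]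

lemma aux_const_mem_G {p q : MvPolynomial (Fin 2) ℝ} {s : ℕ} {m : Fin 2 →₀ ℕ}
    (hm : m ∈ p.support ∨ m ∈ q.support) (h0 : (m 0 : ℝ) ≤ s) (h1 : (m 1 : ℝ) ≤ s)
    (hs1 : 1 ≤ s) {δ : ℝ} (hδ : (s : ℝ) ≤ δ) :
    (fun _ => δ) ∈ {pt : (Fin 2 ⊕ Fin 2) → ℝ |
      ∃ u ∈ (stdForm p q).support, ∀ k, (u k : ℝ) ≤ pt k} := by
  have hs1' : (1:ℝ) ≤ s := by exact_mod_cast hs1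
  rcases hm with hm | hm
  · refine ⟨Finsupp.single (Sum.inl 0) 1 + m.mapDomain Sum.inr,
      aux_supp_stdForm.mpr (Or.inl ⟨m, hm, rfl⟩), ?_⟩
    rintro (j | j)
    · rw [aux_pt_apply_inl]; split <;> simp <;> linarith
    · rw [aux_pt_apply_inr]; fin_cases j <;> simpa using by linarith
  · refine ⟨Finsupp.single (Sum.inl 1) 1 + m.mapDomain Sum.inr,
      aux_supp_stdForm.mpr (Or.inr ⟨m, hm, rfl⟩), ?_⟩
    rintro (j | j)
    · rw [aux_pt_apply_inl]; split <;> simp <;> linarith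
    · rw [aux_pt_apply_inr]; fin_cases j <;> simpa using by linarith

lemma aux_nd_le {d s : ℕ} {p q : MvPolynomial (Fin 2) ℝ}
    (hp : p.IsHomogeneous d) (hq : q.IsHomogeneous d)
    (hds : d < 2 * s) (hs1 : 1 ≤ s)
    (h2 : ∃ m, (m ∈ p.support ∨ m ∈ q.support) ∧ m 1 ≤ s)
    (h1 : ∃ m, (m ∈ p.support ∨ m ∈ q.support) ∧ m 0 ≤ s) :
    (fun _ => (s:ℝ)) ∈ newtonRegion (stdForm p q) := by
  obtain ⟨m, hm, hm1⟩ := h2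
  obtain ⟨m', hm', hm'0⟩ := h1
  have hmd : m 0 + m 1 = d := by
    rcases hm with h|h; exacts [aux_homog_support hp h, aux_homog_support hq h]
  have hm'd : m' 0 + m' 1 = d := by
    rcases hm' with h|h; exacts [aux_homog_support hp h, aux_homog_support hq h]
  set G : Set ((Fin 2 ⊕ Fin 2) → ℝ) := {pt | ∃ u ∈ (stdForm p q).support, ∀ k, (u k : ℝ) ≤ pt k}
  by_cases hc1 : m 0 ≤ s
  · exact subset_convexHull ℝ G
      (aux_const_mem_G hm (by exact_mod_cast hc1) (by exact_mod_cast hm1) hs1 le_rfl)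
  by_cases hc2 : m' 1 ≤ s
  · exact subset_convexHull ℝ G
      (aux_const_mem_G hm' (by exact_mod_cast hm'0) (by exact_mod_cast hc2) hs1 le_rfl)
  push_neg at hc1 hc2
  set a : ℝ := (m 1 : ℝ) with ha
  set b : ℝ := (m' 1 : ℝ) with hb
  have hsb : (s:ℝ) < b := by rw [hb]; exact_mod_cast hc2
  have had : a < (s:ℝ) := by
    have : m 1 + s < d := by omega
    have hds2 : (d:ℝ) < 2 * s := by exact_mod_cast hds
    have : (m 1 : ℝ) + s < d := by exact_mod_cast this
    linarith
  have hab : a < b := lt_trans had hsb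
  have hba : b - a ≠ 0 := by linarith
  set t : ℝ := (b - s) / (b - a) with ht
  have ht0 : 0 ≤ t := by
    apply div_nonneg <;> linarith
  have ht1 : t ≤ 1 := by
    rw [div_le_one (by linarith)]; linarith
  set c : ℝ := 2 * s - d with hc
  have hc0 : 0 ≤ c := by
    have : (d:ℝ) < 2 * s := by exact_mod_cast hds
    linarith
  set u' : (Fin 2 ⊕ Fin 2) → ℝ :=
    Sum.elim (fun _ => (s:ℝ)) (fun j => if j = 1 then a else (m 0 : ℝ) + c) with hu'
  set v' : (Fin 2 ⊕ Fin 2) → ℝ :=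
    Sum.elim (fun _ => (s:ℝ)) (fun j => if j = 1 then b else (m' 0 : ℝ) + c) with hv'
  have hs1' : (1:ℝ) ≤ s := by exact_mod_cast hs1
  have hu'G : u' ∈ G := by
    rcases hm with h|h
    · refine ⟨_, aux_supp_stdForm.mpr (Or.inl ⟨m, h, rfl⟩), ?_⟩
      rintro (j|j)
      · rw [aux_pt_apply_inl]; split <;> simp [hu'] <;> linarith
      · rw [aux_pt_apply_inr]; fin_cases j <;> simp [hu'] <;> linarith
    · refine ⟨_, aux_supp_stdForm.mpr (Or.inr ⟨m, h, rfl⟩), ?_⟩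
      rintro (j|j)
      · rw [aux_pt_apply_inl]; split <;> simp [hu'] <;> linarith
      · rw [aux_pt_apply_inr]; fin_cases j <;> simp [hu'] <;> linarith
  have hv'G : v' ∈ G := by
    rcases hm' with h|h
    · refine ⟨_, aux_supp_stdForm.mpr (Or.inl ⟨m', h, rfl⟩), ?_⟩
      rintro (j|j)
      · rw [aux_pt_apply_inl]; split <;> simp [hv'] <;> linarith
      · rw [aux_pt_apply_inr]; fin_cases j <;> simp [hv'] <;> linarith
    · refine ⟨_, aux_supp_stdForm.mpr (Or.inr ⟨m', h, rfl⟩), ?_⟩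
      rintro (j|j)
      · rw [aux_pt_apply_inl]; split <;> simp [hv'] <;> linarith
      · rw [aux_pt_apply_inr]; fin_cases j <;> simp [hv'] <;> linarith
  apply segment_subset_convexHull hu'G hv'G
  refine ⟨t, 1 - t, ht0, by linarith, by ring, ?_⟩
  have hta : t * a + (1 - t) * b = s := by
    rw [ht]; field_simp; ring
  have hm0 : (m 0 : ℝ) = d - a := by
    have : (m 0 : ℝ) + a = d := by rw [ha]; exact_mod_cast hmd
    linarith
  have hm'0' : (m' 0 : ℝ) = d - b := by
    have : (m' 0 : ℝ) + b = d := by rw [hb]; exact_mod_cast hm'd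
    linarith
  funext k
  rcases k with j | j
  · simp [hu', hv']; ring
  · fin_cases j
    · simp [hu', hv', hm0, hm'0', hc]
      linarith [hta]
    · simpa [hu', hv'] using hta

lemma aux_region_halfspace {p q : MvPolynomial (Fin 2) ℝ} {s : ℕ}
    (hall : ∀ u ∈ (stdForm p q).support, s ≤ u (Sum.inr 1)) :
    newtonRegion (stdForm p q) ⊆ {f : (Fin 2 ⊕ Fin 2) → ℝ | (s:ℝ) ≤ f (Sum.inr 1)} := by
  apply convexHull_min
  · rintro f ⟨u, hu, hf⟩
    exact le_trans (by exact_mod_cast hall u hu) (hf _)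
  · exact convex_halfSpace_ge ⟨fun x y => rfl, fun c x => rfl⟩ _

lemma aux_nd_le' {d s : ℕ} {p q : MvPolynomial (Fin 2) ℝ}
    (hp : p.IsHomogeneous d) (hq : q.IsHomogeneous d)
    (hds : d < 2 * s) (hs1 : 1 ≤ s)
    (h2 : ∃ m, (m ∈ p.support ∨ m ∈ q.support) ∧ m 1 ≤ s)
    (h1 : ∃ m, (m ∈ p.support ∨ m ∈ q.support) ∧ m 0 ≤ s) :
    newtonDistance (stdForm p q) ≤ s := by
  apply csInf_le ⟨0, fun x hx => hx.1.le⟩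
  exact ⟨by exact_mod_cast Nat.lt_of_lt_of_le Nat.zero_lt_one hs1,
    aux_nd_le hp hq hds hs1 h2 h1⟩

lemma aux_nd_eq {d s : ℕ} {p q : MvPolynomial (Fin 2) ℝ}
    (hp : p.IsHomogeneous d) (hq : q.IsHomogeneous d)
    (hds : d < 2 * s) (hs1 : 1 ≤ s)
    (hall : ∀ u ∈ (stdForm p q).support, s ≤ u (Sum.inr 1))
    (h2 : ∃ m, (m ∈ p.support ∨ m ∈ q.support) ∧ m 1 ≤ s) :
    newtonDistance (stdForm p q) = s := by
  obtain ⟨m, hm, hm1⟩ := h2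
  have hmem : Finsupp.single (Sum.inl (if hmc : m ∈ p.support then (0:Fin 2) else 1)) 1
      + m.mapDomain Sum.inr ∈ (stdForm p q).support := by
    split
    · exact aux_supp_stdForm.mpr (Or.inl ⟨m, ‹_›, rfl⟩)
    · rcases hm with h|h
      · exact absurd h ‹_›
      · exact aux_supp_stdForm.mpr (Or.inr ⟨m, h, rfl⟩)
  have hm1' : s ≤ m 1 := by
    have := hall _ hmem
    rwa [aux_pt_apply_inr] at this
  have hm1e : m 1 = s := le_antisymm hm1 hm1'
  have hmd : m 0 + m 1 = d := by
    rcases hm with h|h; exacts [aux_homog_support hp h, aux_homog_support hq h]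
  have hm0 : m 0 ≤ s := by omega
  have hset : {δ : ℝ | 0 < δ ∧ (fun _ => δ) ∈ newtonRegion (stdForm p q)} = Set.Ici (s:ℝ) := by
    ext δ
    constructor
    · rintro ⟨hδ0, hδmem⟩
      exact aux_region_halfspace hall hδmem
    · intro hδ
      have hs1' : (1:ℝ) ≤ s := by exact_mod_cast hs1
      refine ⟨by linarith [Set.mem_Ici.mp hδ], ?_⟩
      exact subset_convexHull ℝ _
        (aux_const_mem_G hm (by exact_mod_cast hm0) (by exact_mod_cast hm1) hs1 hδ)
  rw [newtonDistance, hset, csInf_Ici]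

/-- The substitution `z ↦ Bz` on `ℝ²_z`. -/
noncomputable def zsub (B : Matrix (Fin 2) (Fin 2) ℝ) : Fin 2 → MvPolynomial (Fin 2) ℝ :=
  fun i => ∑ j, C (B i j) * X j

lemma zsub_eq (B : Matrix (Fin 2) (Fin 2) ℝ) (i : Fin 2) :
    zsub B i = linForm (B i 0) (B i 1) := by
  simp [zsub, linForm, Fin.sum_univ_two]

lemma zsub_homog (B : Matrix (Fin 2) (Fin 2) ℝ) (i : Fin 2) : (zsub B i).IsHomogeneous 1 := by
  rw [zsub_eq]
  exact (isHomogeneous_C_mul_X _ _).add (isHomogeneous_C_mul_X _ _)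

lemma aeval_zsub_homog {φ : MvPolynomial (Fin 2) ℝ} {d : ℕ} (hφ : φ.IsHomogeneous d)
    (B : Matrix (Fin 2) (Fin 2) ℝ) : (aeval (zsub B) φ).IsHomogeneous d := by
  simpa using hφ.aeval (zsub B) (zsub_homog B)

lemma aeval_zsub_zsub {B B' : Matrix (Fin 2) (Fin 2) ℝ} (h : B * B' = 1)
    (φ : MvPolynomial (Fin 2) ℝ) : aeval (zsub B') (aeval (zsub B) φ) = φ := by
  rw [comp_aeval_apply]
  have hXX : (fun i => aeval (zsub B') (zsub B i)) = X := by
    funext i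
    have h1 : ∀ l, B i 0 * B' 0 l + B i 1 * B' 1 l = if i = l then 1 else 0 := by
      intro l
      have := congrFun (congrFun h i) l
      rwa [Matrix.mul_apply, Fin.sum_univ_two, Matrix.one_apply] at this
    have c : ∀ l, C (B i 0) * C (B' 0 l) + C (B i 1) * C (B' 1 l)
        = (C (if i = l then (1:ℝ) else 0) : MvPolynomial (Fin 2) ℝ) := by
      intro l; rw [← C_mul, ← C_mul, ← C_add, h1 l]
    have hXi : (X i : MvPolynomial (Fin 2) ℝ)
        = C (if i = 0 then (1:ℝ) else 0) * X 0 + C (if i = 1 then (1:ℝ) else 0) * X 1 := by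
      fin_cases i <;> simp
    simp only [zsub, map_sum, map_add, map_mul, aeval_C, aeval_X, Fin.sum_univ_two,
      algebraMap_eq]
    rw [hXi]
    linear_combination X 0 * c 0 + X 1 * c 1
  rw [hXX, aeval_X_left_apply]

lemma aeval_zsub_linForm (B : Matrix (Fin 2) (Fin 2) ℝ) (a b : ℝ) :
    aeval (zsub B) (linForm a b) =
      linForm (a * B 0 0 + b * B 1 0) (a * B 0 1 + b * B 1 1) := by
  simp only [linForm, map_add, map_mul, aeval_C, aeval_X, zsub_eq, algebraMap_eq, C_add, C_mul]
  ring

lemma aeval_linSubst_rename (A B : Matrix (Fin 2) (Fin 2) ℝ) (φ : MvPolynomial (Fin 2) ℝ) :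
    aeval (linSubst A B) (rename Sum.inr φ) = rename Sum.inr (aeval (zsub B) φ) := by
  rw [aeval_rename]
  conv_rhs => rw [comp_aeval_apply]
  have he : (linSubst A B ∘ Sum.inr) = fun i => rename Sum.inr (zsub B i) := by
    funext i
    simp [linSubst, zsub, map_sum]
  rw [he]

lemma aeval_linSubst_stdForm (A B : Matrix (Fin 2) (Fin 2) ℝ) (p q : MvPolynomial (Fin 2) ℝ) :
    aeval (linSubst A B) (stdForm p q) =
      stdForm (C (A 0 0) * aeval (zsub B) p + C (A 1 0) * aeval (zsub B) q)
        (C (A 0 1) * aeval (zsub B) p + C (A 1 1) * aeval (zsub B) q) := by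
  simp only [stdForm, map_add, map_mul, aeval_linSubst_rename, aeval_X]
  simp only [linSubst, Sum.elim_inl, Fin.sum_univ_two]
  simp only [map_add, map_mul, rename_C]
  ring

lemma aux_recover {A A' : Matrix (Fin 2) (Fin 2) ℝ} (h : A * A' = 1)
    (ψ1 ψ2 : MvPolynomial (Fin 2) ℝ) :
    ψ1 = C (A' 0 0) * (C (A 0 0) * ψ1 + C (A 1 0) * ψ2)
       + C (A' 1 0) * (C (A 0 1) * ψ1 + C (A 1 1) * ψ2) ∧
    ψ2 = C (A' 0 1) * (C (A 0 0) * ψ1 + C (A 1 0) * ψ2)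
       + C (A' 1 1) * (C (A 0 1) * ψ1 + C (A 1 1) * ψ2) := by
  have e : ∀ i j, C (A i 0) * C (A' 0 j) + C (A i 1) * C (A' 1 j)
      = (C (if i = j then (1:ℝ) else 0) : MvPolynomial (Fin 2) ℝ) := by
    intro i j
    rw [← C_mul, ← C_mul, ← C_add]
    congr 1
    have := congrFun (congrFun h i) j
    rwa [Matrix.mul_apply, Fin.sum_univ_two, Matrix.one_apply] at this
  have e00 := e 0 0; have e10 := e 1 0; have e01 := e 0 1; have e11 := e 1 1
  norm_num at e00 e10 e01 e11
  constructor
  · linear_combination -ψ1 * e00 - ψ2 * e10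
  · linear_combination -ψ1 * e01 - ψ2 * e11

lemma aux_row_ne_zero {B : Matrix (Fin 2) (Fin 2) ℝ} (hB : B.det ≠ 0) (i : Fin 2) :
    (B i 0, B i 1) ≠ (0, 0) := by
  intro h
  rw [Prod.mk.injEq] at h
  apply hB
  rw [Matrix.det_fin_two]
  rcases (by decide : ∀ j : Fin 2, j = 0 ∨ j = 1) i with rfl | rfl
  · rw [h.1, h.2]; ring
  · rw [h.1, h.2]; ring

lemma aux_not_both {s : ℕ} {φ₁ φ₂ : MvPolynomial (Fin 2) ℝ}
    (hs₂ : ∀ a b : ℝ, (a, b) ≠ (0, 0) →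
      ¬(linForm a b ^ (s + 1) ∣ φ₁ ∧ linForm a b ^ (s + 1) ∣ φ₂))
    {B : Matrix (Fin 2) (Fin 2) ℝ} (hB : IsUnit B.det) (i : Fin 2) :
    ¬(X i ^ (s+1) ∣ aeval (zsub B) φ₁ ∧ X i ^ (s+1) ∣ aeval (zsub B) φ₂) := by
  rintro ⟨hd1, hd2⟩
  have hBB' : B * B⁻¹ = 1 := Matrix.mul_nonsing_inv B hB
  have hB'B : B⁻¹ * B = 1 := Matrix.nonsing_inv_mul B hB
  have hdetB' : (B⁻¹).det ≠ 0 := by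
    intro h0
    have := congrArg Matrix.det hB'B
    rw [Matrix.det_mul, h0, Matrix.det_one] at this
    simpa using this
  have key : ∀ φ : MvPolynomial (Fin 2) ℝ, X i ^ (s+1) ∣ aeval (zsub B) φ →
      linForm (B⁻¹ i 0) (B⁻¹ i 1) ^ (s+1) ∣ φ := by
    intro φ hφ
    have := map_dvd (aeval (zsub B⁻¹)) hφ
    rw [aeval_zsub_zsub hBB'] at this
    rw [map_pow, aeval_X] at this
    rwa [zsub_eq] at this
  exact hs₂ _ _ (aux_row_ne_zero hdetB' i) ⟨key _ hd1, key _ hd2⟩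

lemma aux_not_both_chi {s : ℕ} {φ₁ φ₂ : MvPolynomial (Fin 2) ℝ}
    (hs₂ : ∀ a b : ℝ, (a, b) ≠ (0, 0) →
      ¬(linForm a b ^ (s + 1) ∣ φ₁ ∧ linForm a b ^ (s + 1) ∣ φ₂))
    {A B : Matrix (Fin 2) (Fin 2) ℝ} (hA : IsUnit A.det) (hB : IsUnit B.det) (i : Fin 2) :
    ¬(X i ^ (s+1) ∣ (C (A 0 0) * aeval (zsub B) φ₁ + C (A 1 0) * aeval (zsub B) φ₂) ∧
      X i ^ (s+1) ∣ (C (A 0 1) * aeval (zsub B) φ₁ + C (A 1 1) * aeval (zsub B) φ₂)) := by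
  rintro ⟨hd1, hd2⟩
  have hAA' : A * A⁻¹ = 1 := Matrix.mul_nonsing_inv A hA
  obtain ⟨r1, r2⟩ := aux_recover hAA' (aeval (zsub B) φ₁) (aeval (zsub B) φ₂)
  refine aux_not_both hs₂ hB i ⟨?_, ?_⟩
  · rw [r1]; exact dvd_add (Dvd.dvd.mul_left hd1 _) (Dvd.dvd.mul_left hd2 _)
  · rw [r2]; exact dvd_add (Dvd.dvd.mul_left hd1 _) (Dvd.dvd.mul_left hd2 _)

lemma aux_exists_small {s : ℕ} {χ1 χ2 : MvPolynomial (Fin 2) ℝ} (i : Fin 2)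
    (h : ¬(X i ^ (s+1) ∣ χ1 ∧ X i ^ (s+1) ∣ χ2)) :
    ∃ m, (m ∈ χ1.support ∨ m ∈ χ2.support) ∧ m i ≤ s := by
  by_contra hcon
  push_neg at hcon
  refine h ⟨aux_X_pow_dvd_iff.mpr fun m hm => ?_, aux_X_pow_dvd_iff.mpr fun m hm => ?_⟩
  · exact hcon m (Or.inl hm)
  · exact hcon m (Or.inr hm)

end Aux

/-- for `S(x,z) = x₁φ₁(z) + x₂φ₂(z)` with `φ₁, φ₂` homogeneous of degree
`d`, and `s` the maximal common multiplicity of a linear factor of `φ₁` and `φ₂`, if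
`s > d/2` then `δ_mod(S) = s`. -/
theorem modNewtonDistance_eq_s (d s : ℕ)
    (φ₁ φ₂ : MvPolynomial (Fin 2) ℝ)
    (h₁ : φ₁.IsHomogeneous d) (h₂ : φ₂.IsHomogeneous d)
    (hs₁ : ∃ a b : ℝ, (a, b) ≠ (0, 0) ∧ linForm a b ^ s ∣ φ₁ ∧ linForm a b ^ s ∣ φ₂)
    (hs₂ : ∀ a b : ℝ, (a, b) ≠ (0, 0) →
      ¬(linForm a b ^ (s + 1) ∣ φ₁ ∧ linForm a b ^ (s + 1) ∣ φ₂))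
    (hs : (d : ℝ) / 2 < (s : ℝ))
    (S : MvPolynomial (Fin 2 ⊕ Fin 2) ℝ)
    (hS : S = X (Sum.inl 0) * rename Sum.inr φ₁ + X (Sum.inl 1) * rename Sum.inr φ₂) :
    modNewtonDistance S = (s : ℝ) := by
  have hSstd : S = stdForm φ₁ φ₂ := hS
  have hds : d < 2 * s := by
    have : (d:ℝ) < 2 * s := by linarith
    exact_mod_cast this
  have hs1 : 1 ≤ s := by
    rcases Nat.eq_zero_or_pos s with h | h
    · rw [h] at hds; omega
    · exact h
  -- the distinguished change of variables in `z`
  obtain ⟨a, b, hab, hd1, hd2⟩ := hs₁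
  have hab' : a ≠ 0 ∨ b ≠ 0 := by
    by_contra h
    push_neg at h
    exact hab (by rw [h.1, h.2])
  set n : ℝ := a^2 + b^2 with hn
  have hn0 : n ≠ 0 := by
    rcases hab' with h | h <;> positivity
  set Bm : Matrix (Fin 2) (Fin 2) ℝ := !![b, a/n; -a, b/n] with hBm
  have hdetBm : Bm.det = 1 := by
    rw [Matrix.det_fin_two_of]
    field_simp
    ring
  have hBmunit : IsUnit Bm.det := by rw [hdetBm]; exact isUnit_one
  -- the transformed linear form is `z₂`
  have hlin : aeval (zsub Bm) (linForm a b) = X 1 := by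
    rw [aeval_zsub_linForm]
    have h1 : a * Bm 0 0 + b * Bm 1 0 = 0 := by
      simp [hBm]; ring
    have h2 : a * Bm 0 1 + b * Bm 1 1 = 1 := by
      simp [hBm]
      field_simp
      ring
    rw [h1, h2]
    simp [linForm]
  set ψ1 : MvPolynomial (Fin 2) ℝ := aeval (zsub Bm) φ₁ with hψ1
  set ψ2 : MvPolynomial (Fin 2) ℝ := aeval (zsub Bm) φ₂ with hψ2
  have hψ1h : ψ1.IsHomogeneous d := aeval_zsub_homog h₁ Bm
  have hψ2h : ψ2.IsHomogeneous d := aeval_zsub_homog h₂ Bm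
  have hX1s1 : X 1 ^ s ∣ ψ1 := by
    have := map_dvd (aeval (zsub Bm)) hd1
    rwa [map_pow, hlin] at this
  have hX1s2 : X 1 ^ s ∣ ψ2 := by
    have := map_dvd (aeval (zsub Bm)) hd2
    rwa [map_pow, hlin] at this
  -- membership : the value `s` is attained
  have hmem : (s : ℝ) ∈ {t : ℝ | ∃ A B : Matrix (Fin 2) (Fin 2) ℝ, IsUnit A.det ∧ IsUnit B.det ∧
      t = newtonDistance (aeval (linSubst A B) S)} := by
    refine ⟨1, Bm, by rw [Matrix.det_one]; exact isUnit_one, hBmunit, ?_⟩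
    have hstd : aeval (linSubst 1 Bm) S = stdForm ψ1 ψ2 := by
      rw [hSstd, aeval_linSubst_stdForm]
      have e00 : (1 : Matrix (Fin 2) (Fin 2) ℝ) 0 0 = 1 := Matrix.one_apply_eq 0
      have e11 : (1 : Matrix (Fin 2) (Fin 2) ℝ) 1 1 = 1 := Matrix.one_apply_eq 1
      have e10 : (1 : Matrix (Fin 2) (Fin 2) ℝ) 1 0 = 0 := Matrix.one_apply_ne (by decide)
      have e01 : (1 : Matrix (Fin 2) (Fin 2) ℝ) 0 1 = 0 := Matrix.one_apply_ne (by decide)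
      rw [e00, e11, e10, e01, C_1, C_0, one_mul, one_mul, zero_mul, zero_mul, add_zero,
        zero_add]
    rw [hstd]
    refine (aux_nd_eq hψ1h hψ2h hds hs1 ?_ ?_).symm
    · intro u hu
      rcases aux_supp_stdForm.mp hu with ⟨m, hm, rfl⟩ | ⟨m, hm, rfl⟩
      · rw [aux_pt_apply_inr]
        exact aux_X_pow_dvd_iff.mp hX1s1 m hm
      · rw [aux_pt_apply_inr]
        exact aux_X_pow_dvd_iff.mp hX1s2 m hm
    · exact aux_exists_small 1 (aux_not_both hs₂ hBmunit 1)
  -- upper bound : every transformed Newton distance is at most `s`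
  have hub : ∀ t ∈ {t : ℝ | ∃ A B : Matrix (Fin 2) (Fin 2) ℝ, IsUnit A.det ∧ IsUnit B.det ∧
      t = newtonDistance (aeval (linSubst A B) S)}, t ≤ (s : ℝ) := by
    rintro t ⟨A, B, hA, hB, rfl⟩
    rw [hSstd, aeval_linSubst_stdForm]
    exact aux_nd_le'
      (((aeval_zsub_homog h₁ B).C_mul _).add ((aeval_zsub_homog h₂ B).C_mul _))
      (((aeval_zsub_homog h₁ B).C_mul _).add ((aeval_zsub_homog h₂ B).C_mul _))
      hds hs1
      (aux_exists_small 1 (aux_not_both_chi hs₂ hA hB 1))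
      (aux_exists_small 0 (aux_not_both_chi hs₂ hA hB 0))
  exact IsGreatest.csSup_eq ⟨hmem, hub⟩
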